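/- (Combined expected cost bound for symmetric rounding.) Let f : 2^V → ℝ≥0 be a non-negative symmetric submodular function with f(∅) = 0, x a fractional allocation, and suppose A'_1, …, A'_k are pairwise disjoint subsets with ∪_i A'_i = ∪_i A(i,θ) and Σ_i f(A'_i) ≤ Σ_i f(A(i,θ)) for each θ. Then ∫_0^1 [ Σ_{i=1}^{k−1} f(A'_i(θ)) + f(A'_k(θ) ∪ U(θ)) ] dθ ≤ (3/2) Σ_{i=1}^k ∫_0^1 f(A(i,θ)) dθ. -/

import Mathlib

/-!
Pointwise, subadditivity and the uncrossing hypothesis bound the integrand by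
`∑ i, f (A i θ) + f (U θ)`, so it suffices to show `∫ f (U θ) ≤ ½ ∑ i, ∫ f (A i θ)`.
By symmetry `f (U θ) = f {v | θ ≤ m v}` with `m = maxᵢ xᵢ`, so the left side is the Lovász
extension `f̂ m`. For submodular `f`, `f̂` satisfies `f̂ (y ⊔ z) + f̂ (y ⊓ z) ≤ f̂ y + f̂ z` and is
subadditive (by the greedy algorithm), so folding in the `xᵢ` one at a time gives
`f̂ m + f̂ (∑ xᵢ - m) ≤ ∑ f̂ xᵢ`. Finally `∑ xᵢ = 1` and symmetry gives `f̂ (1 - m) = f̂ m`.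
-/

open MeasureTheory Set Function

namespace SetFunction

variable {V : Type*}

def IsSubmodular (f : Set V → ℝ) : Prop :=
  ∀ A B : Set V, f (A ∩ B) + f (A ∪ B) ≤ f A + f B

theorem IsSubmodular.union_le {f : Set V → ℝ} (hsub : IsSubmodular f) (hnonneg : ∀ S, 0 ≤ f S)
    (A B : Set V) : f (A ∪ B) ≤ f A + f B := by
  linarith [hsub A B, hnonneg (A ∩ B)]

section Greedy

variable {β : Type*} [LinearOrder β] {f : Set V → ℝ} {r : V → β}

/-- The gain of `v` when elements are added in increasing `r`-order, as in the greedy algorithm. -/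
def greedyWeight (f : Set V → ℝ) (r : V → β) (v : V) : ℝ :=
  f {w | r w ≤ r v} - f {w | r w < r v}

theorem setOf_le_eq_insert (hr : Injective r) (a : V) :
    {w | r w ≤ r a} = insert a {w | r w < r a} := by
  ext w
  simp [le_iff_lt_or_eq, hr.eq_iff, or_comm]

theorem coe_subset_setOf_lt {s : Finset V} {a : V} (hr : Injective r) (ha : a ∉ s)
    (hmax : ∀ x ∈ s, r x ≤ r a) : (s : Set V) ⊆ {w | r w < r a} :=
  fun x hx => (hmax x hx).lt_of_ne fun h => ha (hr h ▸ hx)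

theorem IsSubmodular.sum_greedyWeight_le [DecidableEq V] (hsub : IsSubmodular f)
    (hempty : f ∅ = 0) (hr : Injective r) (S : Finset V) :
    ∑ v ∈ S, greedyWeight f r v ≤ f S := by
  induction S using Finset.induction_on_max_value r with
  | empty => simp [hempty]
  | insert a s ha hmax ih =>
    have hlt := coe_subset_setOf_lt hr ha hmax
    have key := hsub (insert a s) {w | r w < r a}
    rw [insert_inter_of_notMem (show a ∉ {w | r w < r a} from lt_irrefl _),
      inter_eq_left.2 hlt, insert_union, union_eq_right.2 hlt, ← setOf_le_eq_insert hr] at key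
    rw [Finset.sum_insert ha, Finset.coe_insert, greedyWeight]
    linarith

theorem sum_greedyWeight_eq_of_lowerSet [DecidableEq V] (hempty : f ∅ = 0) (hr : Injective r)
    (S : Finset V) (hS : ∀ v ∈ S, ∀ w, r w < r v → w ∈ S) :
    ∑ v ∈ S, greedyWeight f r v = f S := by
  induction S using Finset.induction_on_max_value r with
  | empty => simp [hempty]
  | insert a s ha hmax ih =>
    have hs : (s : Set V) = {w | r w < r a} := by
      refine (coe_subset_setOf_lt hr ha hmax).antisymm fun w hw => ?_
      exact (Finset.mem_insert.1 (hS a (s.mem_insert_self a) w hw)).resolve_left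
        fun h => (h ▸ hw).ne rfl
    have hs_lower : ∀ v ∈ s, ∀ w, r w < r v → w ∈ s := fun v hv w hw => by
      rw [← Finset.mem_coe, hs]
      exact hw.trans_le (hmax v hv)
    rw [Finset.sum_insert ha, ih hs_lower, Finset.coe_insert, hs, ← setOf_le_eq_insert hr,
      greedyWeight]
    ring

end Greedy

theorem exists_injective_lex_antitone [Countable V] (q : V → ℝ) :
    ∃ r : V → ℝ ×ₗ ℕ, Injective r ∧ ∀ v w, r w < r v → q v ≤ q w := by
  obtain ⟨e, he⟩ := Countable.exists_injective_nat V
  refine ⟨fun v => toLex (-q v, e v), fun v w h => he (congrArg (fun p => (ofLex p).2) h),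
    fun v w h => ?_⟩
  rcases Prod.Lex.toLex_lt_toLex.1 h with h | ⟨h, -⟩ <;> simp only at h <;> linarith

/-- On the cube `[0,1]^V` this is the Lovász extension of `f`. -/
noncomputable def lovasz (f : Set V → ℝ) (q : V → ℝ) : ℝ :=
  ∫ θ in (0:ℝ)..1, f {v | θ ≤ q v}

theorem lovasz_zero {f : Set V → ℝ} (hempty : f ∅ = 0) : lovasz f 0 = 0 := by
  refine (intervalIntegral.integral_congr_ae (g := fun _ => 0) ?_).trans
    intervalIntegral.integral_zero
  refine Filter.Eventually.of_forall fun θ hθ => ?_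
  rw [uIoc_of_le zero_le_one] at hθ
  simp [not_le.2 hθ.1, hempty]

theorem lovasz_one_sub [Countable V] {f : Set V → ℝ} (hsym : ∀ A : Set V, f A = f (univ \ A))
    (m : V → ℝ) : lovasz f (1 - m) = lovasz f m := by
  have hnull : ∀ᵐ s : ℝ, s ∉ range m := (countable_range m).ae_notMem volume
  calc lovasz f (1 - m) = ∫ θ in (0:ℝ)..1, f {v | m v ≤ 1 - θ} := by
        simp only [lovasz, Pi.sub_apply, Pi.one_apply, le_sub_comm]
    _ = ∫ s in (0:ℝ)..1, f {v | m v ≤ s} := by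
        simpa using intervalIntegral.integral_comp_sub_left (a := 0) (b := 1)
          (fun s => f {v | m v ≤ s}) 1
    _ = ∫ s in (0:ℝ)..1, f {v | s < m v} := intervalIntegral.integral_congr fun s _ => by
        rw [hsym]
        congr 1
        ext v
        simp
    _ = lovasz f m := intervalIntegral.integral_congr_ae <| hnull.mono fun s hs _ => by
        congr 1
        ext v
        exact lt_iff_le_and_ne.trans (and_iff_left fun h => hs ⟨v, h.symm⟩)

theorem apply_setOf_forall_lt_eq {f : Set V → ℝ} (hsym : ∀ A : Set V, f A = f (univ \ A))
    {ι : Type*} [Fintype ι] [Nonempty ι] (x : V → ι → ℝ) (θ : ℝ) :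
    f {v | ∀ i, x v i < θ} =
      f {v | θ ≤ Finset.univ.sup' Finset.univ_nonempty (fun i v => x v i) v} := by
  rw [hsym]
  congr 1
  ext v
  simp [Finset.sup'_apply, Finset.le_sup'_iff]

variable [Fintype V]

theorem sum_indicator_Iic_eq_sum_filter (q w : V → ℝ) (θ : ℝ) [DecidablePred fun v => θ ≤ q v] :
    ∑ v, (Iic (q v)).indicator (fun _ => w v) θ = ∑ v ∈ Finset.univ.filter (θ ≤ q ·), w v := by
  rw [Finset.sum_filter]
  simp only [indicator_apply, mem_Iic]

theorem intervalIntegrable_indicator_Iic_const (c w a b : ℝ) :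
    IntervalIntegrable ((Iic c).indicator fun _ => w) volume a b :=
  intervalIntegrable_iff.2 <|
    (intervalIntegrable_iff.1 intervalIntegrable_const).indicator measurableSet_Iic

theorem intervalIntegrable_sum_indicator_Iic (q w : V → ℝ) (a b : ℝ) :
    IntervalIntegrable (fun θ => ∑ v, (Iic (q v)).indicator (fun _ => w v) θ) volume a b := by
  simpa only [Finset.sum_fn] using IntervalIntegrable.sum Finset.univ fun v _ =>
    intervalIntegrable_indicator_Iic_const (q v) (w v) a b

theorem integral_sum_indicator_Iic {q : V → ℝ} (hq : ∀ v, q v ∈ Icc 0 1) (w : V → ℝ) :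
    ∫ θ in (0:ℝ)..1, ∑ v, (Iic (q v)).indicator (fun _ => w v) θ = ∑ v, q v * w v := by
  rw [intervalIntegral.integral_finsetSum fun v _ =>
    intervalIntegrable_indicator_Iic_const (q v) (w v) 0 1]
  exact Finset.sum_congr rfl fun v _ =>
    (intervalIntegral.integral_indicator (hq v)).trans (by simp)

theorem superlevel_eq_sum_indicator {f : Set V → ℝ} (hempty : f ∅ = 0) {β : Type*} [LinearOrder β]
    {r : V → β} (hr : Injective r) {q : V → ℝ} (hrq : ∀ v w, r w < r v → q v ≤ q w) (θ : ℝ) :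
    f {v | θ ≤ q v} = ∑ v, (Iic (q v)).indicator (fun _ => greedyWeight f r v) θ := by
  classical
  rw [sum_indicator_Iic_eq_sum_filter, sum_greedyWeight_eq_of_lowerSet hempty hr,
    Finset.coe_filter_univ]
  intro v hv w hw
  simp only [Finset.mem_filter, Finset.mem_univ, true_and] at hv ⊢
  exact hv.trans (hrq v w hw)

theorem intervalIntegrable_superlevel {f : Set V → ℝ} (hempty : f ∅ = 0) (q : V → ℝ) (a b : ℝ) :
    IntervalIntegrable (fun θ => f {v | θ ≤ q v}) volume a b := by
  obtain ⟨r, hr, hrq⟩ := exists_injective_lex_antitone q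
  simpa only [superlevel_eq_sum_indicator hempty hr hrq] using
    intervalIntegrable_sum_indicator_Iic q _ a b

theorem lovasz_eq_sum_mul_greedyWeight {f : Set V → ℝ} (hempty : f ∅ = 0) {β : Type*}
    [LinearOrder β] {r : V → β} (hr : Injective r) {q : V → ℝ}
    (hrq : ∀ v w, r w < r v → q v ≤ q w) (hq : ∀ v, q v ∈ Icc 0 1) :
    lovasz f q = ∑ v, q v * greedyWeight f r v := by
  rw [lovasz, ← integral_sum_indicator_Iic hq]
  exact intervalIntegral.integral_congr fun θ _ => superlevel_eq_sum_indicator hempty hr hrq θ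

theorem IsSubmodular.sum_mul_greedyWeight_le_lovasz {f : Set V → ℝ} (hsub : IsSubmodular f)
    (hempty : f ∅ = 0) {β : Type*} [LinearOrder β] {r : V → β} (hr : Injective r) {q : V → ℝ}
    (hq : ∀ v, q v ∈ Icc 0 1) :
    ∑ v, q v * greedyWeight f r v ≤ lovasz f q := by
  classical
  rw [← integral_sum_indicator_Iic hq]
  refine intervalIntegral.integral_mono_on zero_le_one
    (intervalIntegrable_sum_indicator_Iic _ _ _ _) (intervalIntegrable_superlevel hempty q 0 1)
    fun θ _ => ?_
  rw [sum_indicator_Iic_eq_sum_filter]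
  simpa only [Finset.coe_filter_univ] using
    hsub.sum_greedyWeight_le hempty hr (Finset.univ.filter (θ ≤ q ·))

theorem IsSubmodular.lovasz_add_le {f : Set V → ℝ} (hsub : IsSubmodular f) (hempty : f ∅ = 0)
    {y z : V → ℝ} (hy : 0 ≤ y) (hz : 0 ≤ z) (hyz : y + z ≤ 1) :
    lovasz f (y + z) ≤ lovasz f y + lovasz f z := by
  obtain ⟨r, hr, hrq⟩ := exists_injective_lex_antitone (y + z)
  have hcube : ∀ q : V → ℝ, 0 ≤ q → q ≤ y + z → ∀ v, q v ∈ Icc 0 1 :=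
    fun q h0 h1 v => ⟨h0 v, (h1 v).trans (hyz v)⟩
  -- The greedy weights of the order of `y + z` are tight at `y + z` and feasible at `y` and `z`.
  rw [lovasz_eq_sum_mul_greedyWeight hempty hr hrq (hcube _ (add_nonneg hy hz) le_rfl)]
  calc ∑ v, (y + z) v * greedyWeight f r v
      = ∑ v, y v * greedyWeight f r v + ∑ v, z v * greedyWeight f r v := by
        simp only [Pi.add_apply, add_mul, Finset.sum_add_distrib]
    _ ≤ lovasz f y + lovasz f z := add_le_add
        (hsub.sum_mul_greedyWeight_le_lovasz hempty hr (hcube y hy (le_add_of_nonneg_right hz)))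
        (hsub.sum_mul_greedyWeight_le_lovasz hempty hr (hcube z hz (le_add_of_nonneg_left hy)))

theorem IsSubmodular.lovasz_sup_add_lovasz_inf_le {f : Set V → ℝ} (hsub : IsSubmodular f)
    (hempty : f ∅ = 0) (y z : V → ℝ) :
    lovasz f (y ⊔ z) + lovasz f (y ⊓ z) ≤ lovasz f y + lovasz f z := by
  have hI := fun q => intervalIntegrable_superlevel hempty q 0 1
  simp only [lovasz]
  rw [← intervalIntegral.integral_add (hI _) (hI _),
    ← intervalIntegral.integral_add (hI _) (hI _)]
  refine intervalIntegral.integral_mono_on zero_le_one ((hI _).add (hI _)) ((hI _).add (hI _))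
    fun θ _ => ?_
  have hsup : {v | θ ≤ (y ⊔ z) v} = {v | θ ≤ y v} ∪ {v | θ ≤ z v} := by ext v; simp
  have hinf : {v | θ ≤ (y ⊓ z) v} = {v | θ ≤ y v} ∩ {v | θ ≤ z v} := by ext v; simp
  rw [hsup, hinf, add_comm]
  exact hsub _ _

theorem IsSubmodular.lovasz_sup'_add_lovasz_sum_sub_sup'_le {f : Set V → ℝ}
    (hsub : IsSubmodular f) (hempty : f ∅ = 0) {ι : Type*} {s : Finset ι} (hs : s.Nonempty)
    {F : ι → V → ℝ} (hF : ∀ i ∈ s, 0 ≤ F i) (hsum : ∑ i ∈ s, F i ≤ 1) :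
    lovasz f (s.sup' hs F) + lovasz f (∑ i ∈ s, F i - s.sup' hs F) ≤ ∑ i ∈ s, lovasz f (F i) := by
  induction hs using Finset.Nonempty.cons_induction with
  | singleton a => simp [lovasz_zero hempty]
  | cons a t hat ht ih =>
    rw [Finset.sum_cons] at hsum ⊢
    rw [Finset.sup'_cons ht, Finset.sum_cons]
    set M := t.sup' ht F
    set S := ∑ i ∈ t, F i
    have hFa : 0 ≤ F a := hF a (Finset.mem_cons_self a t)
    have hFt : ∀ i ∈ t, 0 ≤ F i := fun i hi => hF i (Finset.mem_cons_of_mem hi)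
    have hM0 : 0 ≤ M := by
      obtain ⟨i, hi⟩ := ht
      exact (hFt i hi).trans (Finset.le_sup' F hi)
    have hMS : M ≤ S := Finset.sup'_le ht F fun i hi => Finset.single_le_sum hFt hi
    have hsplit : F a + S - F a ⊔ M = F a ⊓ M + (S - M) := by
      funext v
      have := min_add_max (F a v) (M v)
      simp only [Pi.add_apply, Pi.sub_apply, Pi.inf_apply, Pi.sup_apply]
      linarith
    have hlattice := hsub.lovasz_sup_add_lovasz_inf_le hempty (F a) M
    have hadd := hsub.lovasz_add_le hempty (le_inf hFa hM0) (sub_nonneg.2 hMS)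
      ((add_le_add inf_le_left (sub_le_self _ hM0)).trans hsum)
    have hih := ih hFt ((le_add_of_nonneg_left hFa).trans hsum)
    rw [hsplit]
    linarith

theorem IsSubmodular.integral_forall_lt_le_half_sum {f : Set V → ℝ} (hsub : IsSubmodular f)
    (hsym : ∀ A : Set V, f A = f (univ \ A)) (hempty : f ∅ = 0) {ι : Type*} [Fintype ι]
    [Nonempty ι] (x : V → ι → ℝ) (hx0 : ∀ v i, 0 ≤ x v i) (hxsum : ∀ v, ∑ i, x v i = 1) :
    ∫ θ in (0:ℝ)..1, f {v | ∀ i, x v i < θ} ≤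
      (1 / 2) * ∑ i, ∫ θ in (0:ℝ)..1, f {v | θ ≤ x v i} := by
  set F : ι → V → ℝ := fun i v => x v i
  have hF1 : ∑ i, F i = 1 := funext fun v => by simp [F, Finset.sum_apply, hxsum]
  have key := hsub.lovasz_sup'_add_lovasz_sum_sub_sup'_le hempty Finset.univ_nonempty
    (fun i _ v => hx0 v i) hF1.le
  rw [hF1, lovasz_one_sub hsym] at key
  rw [intervalIntegral.integral_congr fun θ _ => apply_setOf_forall_lt_eq hsym x θ]
  change lovasz f _ ≤ 1 / 2 * ∑ i, lovasz f (F i)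
  linarith

end SetFunction

open SetFunction in
theorem symmetric_rounding_cost_bound {V : Type*} [Fintype V] {k : ℕ}
    (f : Set V → ℝ)
    (hsub : ∀ A B : Set V, f A + f B ≥ f (A ∩ B) + f (A ∪ B))
    (hsym : ∀ A : Set V, f A = f (Set.univ \ A))
    (hnonneg : ∀ S : Set V, 0 ≤ f S) (hempty : f (∅ : Set V) = 0)
    (x : V → Fin (k + 1) → ℝ)
    (hx0 : ∀ v i, 0 ≤ x v i) (hxsum : ∀ v, ∑ i, x v i = 1)
    (A' : ℝ → Fin (k + 1) → Set V)
    (hcost : ∀ θ : ℝ, ∑ i, f (A' θ i) ≤ ∑ i, f {v : V | θ ≤ x v i}) :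
    (∫ θ in (0:ℝ)..1,
        ((∑ i ∈ Finset.univ.erase (Fin.last k), f (A' θ i))
          + f (A' θ (Fin.last k) ∪ {v : V | ∀ i : Fin (k + 1), x v i < θ}))) ≤
      (3 / 2) * ∑ i : Fin (k + 1), ∫ θ in (0:ℝ)..1, f {v : V | θ ≤ x v i} := by
  have hsubmod : IsSubmodular f := hsub
  have hA (i : Fin (k + 1)) := intervalIntegrable_superlevel hempty (fun v => x v i) 0 1
  have hU : IntervalIntegrable (fun θ => f {v | ∀ i, x v i < θ}) volume 0 1 := by
    simpa only [apply_setOf_forall_lt_eq hsym x] using intervalIntegrable_superlevel hempty _ 0 1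
  have hA_sum : IntervalIntegrable (fun θ => ∑ i, f {v | θ ≤ x v i}) volume 0 1 := by
    simpa only [Finset.sum_fn] using IntervalIntegrable.sum Finset.univ fun i _ => hA i
  by_cases hint : IntervalIntegrable (fun θ => (∑ i ∈ Finset.univ.erase (Fin.last k), f (A' θ i))
      + f (A' θ (Fin.last k) ∪ {v | ∀ i, x v i < θ})) volume 0 1
  swap
  · -- `A' θ` need not depend measurably on `θ`; then the left side is the junk value `0`.
    rw [intervalIntegral.integral_undef hint]
    exact mul_nonneg (by norm_num) <| Finset.sum_nonneg fun i _ =>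
      intervalIntegral.integral_nonneg zero_le_one fun θ _ => hnonneg _
  calc _ ≤ ∫ θ in (0:ℝ)..1, ((∑ i, f {v | θ ≤ x v i}) + f {v | ∀ i, x v i < θ}) := by
        refine intervalIntegral.integral_mono_on zero_le_one hint (hA_sum.add hU) fun θ _ => ?_
        have hunion_le := hsubmod.union_le hnonneg (A' θ (Fin.last k)) {v | ∀ i, x v i < θ}
        have hsplit := Finset.sum_erase_add Finset.univ (fun i => f (A' θ i))
          (Finset.mem_univ (Fin.last k))
        linarith [hcost θ]
    _ = (∑ i, ∫ θ in (0:ℝ)..1, f {v | θ ≤ x v i})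
          + ∫ θ in (0:ℝ)..1, f {v | ∀ i, x v i < θ} := by
        rw [intervalIntegral.integral_add hA_sum hU,
          intervalIntegral.integral_finsetSum fun i _ => hA i]
    _ ≤ _ := by linarith [hsubmod.integral_forall_lt_le_half_sum hsym hempty x hx0 hxsum]
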